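/- Let K_n have vertices v_1,...,v_n with f(v_1) ≤ ... ≤ f(v_n), positive integers. Let x(f) = (x_1,...,x_n) with x_i = f(v_i) − i, and let m = ψ(x(f)), the number of x(f)-dominated monotone lattice paths ending at (x_n, n). Then the join G = K_n ⊕ K̄_m with list sizes f^(m) (f on K_n, and n on each vertex of K̄_m) is not f^(m)-choosable: there is a list assignment L with |L(v_i)| = f(v_i) and |L(u)| = n for u in K̄_m admitting no proper colouring from the lists. -/

import Mathlib

/-- A monotone lattice path (`true` = up, `false` = right) dominated by an integer vector
`x = (x_1, …, x_n)` and ending at `(x n, n)`. -/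
def DominatedZ (n : ℕ) (x : ℕ → ℤ) (s : List Bool) : Prop :=
  s.count true = n ∧ (s.count false : ℤ) = x n ∧
    ∀ k, (s.take k).count true < n →
      ((s.take k).count false : ℤ) ≤ x ((s.take k).count true + 1)

/-- The number of `x`-dominated monotone lattice paths from `(0,0)` to `(x n, n)`. -/
noncomputable def psiZ (n : ℕ) (x : ℕ → ℤ) : ℕ :=
  Set.ncard {s : List Bool | DominatedZ n x s}

/-- A graph `G` with list sizes `f` is `f`-choosable if every list assignment with the
prescribed list sizes admits a proper colouring from the lists. -/
def Choosable {V : Type*} (G : SimpleGraph V) (f : V → ℕ) : Prop :=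
  ∀ L : V → Finset ℕ, (∀ v, (L v).card = f v) →
    ∃ c : V → ℕ, (∀ v, c v ∈ L v) ∧ ∀ ⦃u v⦄, G.Adj u v → c u ≠ c v

/-- The join `G ⊕ K̄_m` of a graph `G` with the edgeless graph on `m` vertices. -/
def joinK {V : Type*} (G : SimpleGraph V) (m : ℕ) : SimpleGraph (V ⊕ Fin m) where
  Adj a b :=
    match a, b with
    | Sum.inl u, Sum.inl v => G.Adj u v
    | Sum.inl _, Sum.inr _ => True
    | Sum.inr _, Sum.inl _ => True
    | Sum.inr _, Sum.inr _ => False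
  symm := by
    constructor
    rintro (u | i) (v | j) h
    · exact G.adj_symm h
    · trivial
    · trivial
    · exact h
  loopless := by
    constructor
    rintro (u | i) h
    · exact G.loopless.irrefl u h
    · exact h

/-!
Give `v_k` the colours `{0, …, f(v_k) - 1}` and each independent vertex the set of (0-based)
positions of the up-steps of its dominated path. In a colouring from these lists the `n`
distinct colours `C` used on `K_n` include at least `t + 1` colours below `f(v_{t+1})` for
every `t < n`, since `v_1, …, v_{t+1}` are coloured below it. That is exactly the statement
that the word of length `f(v_n)` with up-steps at the positions in `C` is an
`x(f)`-dominated path, so `C` is the list of some independent vertex, whose colour then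
clashes with a vertex of `K_n`.
-/

open Finset

def upSteps (s : List Bool) : Finset ℕ := (range s.length).filter (fun j => s[j]? = some true)

def ofUpSteps (M : ℕ) (C : Finset ℕ) : List Bool := (List.range M).map (· ∈ C)

@[simp] lemma length_ofUpSteps (M : ℕ) (C : Finset ℕ) : (ofUpSteps M C).length = M := by
  simp [ofUpSteps]

lemma getElem?_ofUpSteps (M : ℕ) (C : Finset ℕ) (j : ℕ) :
    (ofUpSteps M C)[j]? = if j < M then some (decide (j ∈ C)) else none := by
  split_ifs with h
  · simp [ofUpSteps, List.getElem?_range h]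
  · simp [ofUpSteps, h]

lemma take_ofUpSteps (M k : ℕ) (C : Finset ℕ) :
    (ofUpSteps M C).take k = ofUpSteps (min k M) C := by
  simp [ofUpSteps, ← List.map_take]

lemma upSteps_ofUpSteps (M : ℕ) (C : Finset ℕ) :
    upSteps (ofUpSteps M C) = C.filter (· < M) := by
  ext j
  by_cases h : j < M <;> simp [upSteps, getElem?_ofUpSteps, h]

lemma ofUpSteps_upSteps (s : List Bool) : ofUpSteps s.length (upSteps s) = s := by
  refine List.ext_getElem? fun j => ?_
  rw [getElem?_ofUpSteps]
  split_ifs with h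
  · simp [upSteps, h]
  · simp [List.getElem?_eq_none (not_lt.1 h)]

lemma count_true_ofUpSteps (M : ℕ) (C : Finset ℕ) :
    (ofUpSteps M C).count true = #(C.filter (· < M)) := by
  rw [show C.filter (· < M) = (range M).filter (· ∈ C) by ext; simp [and_comm],
    ofUpSteps, List.count_eq_countP, List.countP_map, card_def, filter_val, range_val,
    ← Multiset.countP_eq_card_filter, Multiset.range, Multiset.coe_countP]
  simp [Function.comp_def]

lemma card_upSteps (s : List Bool) : #(upSteps s) = s.count true := by
  rw [← congrArg (List.count true) (ofUpSteps_upSteps s), count_true_ofUpSteps,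
    filter_true_of_mem fun j (hj : j ∈ upSteps s) => mem_range.1 (mem_filter.1 hj).1]

lemma finite_setOf_dominatedZ (n : ℕ) (x : ℕ → ℤ) : {s | DominatedZ n x s}.Finite := by
  refine (List.finite_length_eq Bool (n + (x n).toNat)).subset fun s ⟨htrue, hfalse, _⟩ => ?_
  have := List.count_true_add_count_false s
  show s.length = _
  omega

lemma dominatedZ_ofUpSteps {n : ℕ} {f : ℕ → ℕ} {C : Finset ℕ} (hC : C ⊆ range (f n))
    (hcard : #C = n) (hlow : ∀ t < n, t + 1 ≤ #(C.filter (· < f (t + 1)))) :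
    DominatedZ n (fun i => (f i : ℤ) - i) (ofUpSteps (f n) C) := by
  have hfull : (ofUpSteps (f n) C).count true = n := by
    rw [count_true_ofUpSteps, filter_true_of_mem fun j hj => mem_range.1 (hC hj), hcard]
  refine ⟨hfull, ?_, fun k hk => ?_⟩
  · have := List.count_true_add_count_false (ofUpSteps (f n) C)
    simp only [length_ofUpSteps] at this
    show ((ofUpSteps (f n) C).count false : ℤ) = f n - n
    omega
  rw [take_ofUpSteps] at hk ⊢
  set k' := min k (f n)
  set t := (ofUpSteps k' C).count true
  -- otherwise the prefix would contain all of the ≥ t + 1 elements of `C` below `f (t + 1)`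
  have hk' : k' < f (t + 1) := by
    by_contra! hge
    have hsub : C.filter (· < f (t + 1)) ⊆ C.filter (· < k') :=
      monotone_filter_right C fun _ _ h => h.trans_le hge
    have := (hlow t hk).trans (card_le_card hsub)
    rw [← count_true_ofUpSteps] at this
    omega
  have := List.count_true_add_count_false (ofUpSteps k' C)
  simp only [length_ofUpSteps] at this
  push_cast
  omega

lemma dominatedZ_ofUpSteps_image {n : ℕ} {f : ℕ → ℕ} (hf : MonotoneOn f (Set.Icc 1 n))
    {c : Fin n → ℕ} (hc : Function.Injective c) (hcf : ∀ k, c k < f (k + 1)) :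
    DominatedZ n (fun i => (f i : ℤ) - i) (ofUpSteps (f n) (univ.image c)) := by
  have hfle : ∀ {i j : ℕ}, i ≤ j → j < n → f (i + 1) ≤ f (j + 1) := fun hij hj =>
    hf ⟨by omega, by omega⟩ ⟨by omega, hj⟩ (by omega)
  refine dominatedZ_ofUpSteps ?_ ?_ fun t ht => ?_
  · intro y hy
    obtain ⟨k, -, rfl⟩ := mem_image.1 hy
    have hk := k.2
    exact mem_range.2 ((hcf k).trans_le (hf ⟨by omega, hk⟩ ⟨by omega, le_rfl⟩ hk))
  · rw [card_image_of_injective _ hc, card_univ, Fintype.card_fin]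
  · calc t + 1 = #((Iic (⟨t, ht⟩ : Fin n)).image c) := by
          rw [card_image_of_injective _ hc, Fin.card_Iic]
      _ ≤ _ := by
          refine card_le_card fun y hy => ?_
          obtain ⟨k, hk, rfl⟩ := mem_image.1 hy
          exact mem_filter.2 ⟨mem_image_of_mem _ (mem_univ _),
            (hcf k).trans_le (hfle (Fin.le_iff_val_le_val.1 (mem_Iic.1 hk)) ht)⟩

lemma not_choosable_joinK_of_cover {V : Type*} {G : SimpleGraph V} {m : ℕ} {g : V → ℕ}
    {h : ℕ} (L : V → Finset ℕ) (hL : ∀ v, #(L v) = g v) (A : Fin m → Finset ℕ)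
    (hA : ∀ i, #(A i) = h)
    (hcover : ∀ c : V → ℕ, (∀ v, c v ∈ L v) →
      (∀ ⦃u v⦄, G.Adj u v → c u ≠ c v) → ∃ i, ↑(A i) ⊆ Set.range c) :
    ¬ Choosable (joinK G m) (Sum.elim g fun _ => h) := by
  intro hch
  obtain ⟨c, hcL, hc⟩ := hch (Sum.elim L A) (by rintro (v | i); exacts [hL v, hA i])
  obtain ⟨i, hi⟩ := hcover (c ∘ Sum.inl) (fun v => hcL (.inl v))
    (fun u v huv => hc (u := .inl u) (v := .inl v) huv)
  obtain ⟨v, hv⟩ := hi (hcL (.inr i))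
  exact hc (u := .inl v) (v := .inr i) trivial hv

theorem stmt_13_general (n : ℕ) (f : ℕ → ℕ)
    (hmono : ∀ i, 1 ≤ i → i < n → f i ≤ f (i + 1)) :
    ¬ Choosable
        (joinK (SimpleGraph.completeGraph (Fin n)) (psiZ n (fun i => (f i : ℤ) - i)))
        (Sum.elim (fun k : Fin n => f ((k : ℕ) + 1)) fun _ => n) := by
  have hf : MonotoneOn f (Set.Icc 1 n) :=
    monotoneOn_of_le_add_one Set.ordConnected_Icc fun i _ hi hi1 => hmono i hi.1 hi1.2
  set x : ℕ → ℤ := fun i => (f i : ℤ) - i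
  have hfin := finite_setOf_dominatedZ n x
  set T := hfin.toFinset
  let e : Fin (psiZ n x) ≃ T :=
    (T.equivFin.trans (finCongr (Set.ncard_eq_toFinset_card _ hfin).symm)).symm
  refine not_choosable_joinK_of_cover (fun k => range (f (k + 1))) (by simp)
    (fun i => upSteps (e i)) (fun i => ?_) fun c hcL hc => ?_
  · rw [card_upSteps]
    exact (hfin.mem_toFinset.1 (e i).2).1
  · have hinj : Function.Injective c := fun u v huv => by_contra fun hne => hc hne huv
    have hpath : ofUpSteps (f n) (univ.image c) ∈ T :=
      hfin.mem_toFinset.2 (dominatedZ_ofUpSteps_image hf hinj fun k => mem_range.1 (hcL k))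
    refine ⟨e.symm ⟨_, hpath⟩, fun a ha => ?_⟩
    rw [Equiv.apply_symm_apply, upSteps_ofUpSteps, mem_coe] at ha
    simpa using (mem_filter.1 ha).1

/-- Let `K_n` have vertices `v_1, …, v_n` (vertex `k : Fin n` being `v_{k+1}`) with
positive list sizes `f(v_1) ≤ … ≤ f(v_n)`, and let `m = ψ(x(f))` where
`x(f)_i = f(v_i) − i`. Then `K_n ⊕ K̄_m`, with list size `n` on each of the `m`
independent vertices, is not choosable. -/
theorem stmt_13 (n : ℕ) (hn : 0 < n) (f : ℕ → ℕ)
    (hpos : ∀ i, 1 ≤ i → i ≤ n → 0 < f i)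
    (hmono : ∀ i, 1 ≤ i → i < n → f i ≤ f (i + 1)) :
    ¬ Choosable
        (joinK (SimpleGraph.completeGraph (Fin n)) (psiZ n (fun i => (f i : ℤ) - i)))
        (Sum.elim (fun k : Fin n => f ((k : ℕ) + 1)) fun _ => n) :=
  stmt_13_general n f hmono
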